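/- Let d ≥ 2 be an integer, γ > 1 real, c = γ − d − 1, and β ∈ (0,1). Let ψ : ℝ^d → ℂ^d be a measurable vector field such that for every j ≥ 1 and every η ≠ 0 the integrals defining R_{β^j}[ψ](η) converge absolutely. If R_β[ψ] = ψ (everywhere on ℝ^d \ {0}), then R_{β^n}[ψ] = ψ for every integer n ≥ 1. -/

import Mathlib

open MeasureTheory Set RealInnerProductSpace
open scoped ENNReal NNReal

noncomputable section

/-- `ℝ^d` with the Euclidean norm. -/
abbrev Ed (d : ℕ) := EuclideanSpace ℝ (Fin d)

/-- `ℂ^d` with the Euclidean norm. -/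
abbrev EdC (d : ℕ) := EuclideanSpace ℂ (Fin d)

/-- A function on `ℝ^d` is radial if its value depends only on the norm of the argument. -/
def IsRadial {d : ℕ} {α : Type*} (f : Ed d → α) : Prop :=
  ∀ x y : Ed d, ‖x‖ = ‖y‖ → f x = f y

/-- The pairing `⟨η, v⟩` of a real vector with a complex vector, extended ℂ-bilinearly. -/
def pairC {d : ℕ} (η : Ed d) (v : EdC d) : ℂ := ∑ i, (η i : ℂ) * v i

/-- The Leray projection `P_η v = v − (⟨v,η⟩/|η|²) η`, extended ℂ-bilinearly. -/
def lerayC {d : ℕ} (η : Ed d) (v : EdC d) : EdC d :=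
  (WithLp.equiv 2 (Fin d → ℂ)).symm
    (fun i => v i - (pairC η v / ((‖η‖ ^ 2 : ℝ) : ℂ)) * (η i : ℂ))

/-- The integrand of the nonlinear part of the renormalization operator (complex fields). -/
def renormKernelC (d : ℕ) (γ : ℝ) (ϑ : Ed d → EdC d) (η : Ed d) (t : ℝ) (x : Ed d) : EdC d :=
  (t ^ (-(γ - d - 1)) * Real.exp (‖η‖ ^ γ * (1 - t ^ γ))) •
    (pairC η (ϑ (t • η - x)) • lerayC η (ϑ x))

/-- Absolute convergence of the integrals defining `R_β[ϑ](η)` (complex fields). -/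
def RenormDefinedC (d : ℕ) (γ β : ℝ) (ϑ : Ed d → EdC d) (η : Ed d) : Prop :=
  IntegrableOn (fun q : ℝ × Ed d => renormKernelC d γ ϑ η q.1 q.2)
    (Set.Ioc (1 : ℝ) β⁻¹ ×ˢ Set.univ)

/-- The renormalization operator `R_β` on complex vector fields. -/
def renormC (d : ℕ) (γ β : ℝ) (ϑ : Ed d → EdC d) (η : Ed d) : EdC d :=
  (β ^ (γ - d - 1) * Real.exp (‖η‖ ^ γ * (1 - β ^ (-γ)))) • ϑ (β⁻¹ • η)
    + (Complex.I * (γ : ℂ)) •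
        ∫ t in Set.Ioc (1 : ℝ) β⁻¹, ∫ x : Ed d, renormKernelC d γ ϑ η t x

/-- The Leray projection `P_η v = v − (⟨v,η⟩/|η|²) η` for real vector fields. -/
def lerayR {d : ℕ} (η v : Ed d) : Ed d := v - (⟪v, η⟫ / ‖η‖ ^ 2) • η

/-- The integrand of the nonlinear part of the renormalization operator (real fields). -/
def renormKernelR (d : ℕ) (γ : ℝ) (ψ : Ed d → Ed d) (η : Ed d) (t : ℝ) (x : Ed d) : Ed d :=
  (t ^ (-(γ - d - 1)) * Real.exp (‖η‖ ^ γ * (1 - t ^ γ))) •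
    (⟪η, ψ (t • η - x)⟫ • lerayR η (ψ x))

/-- Absolute convergence of the integrals defining `R_β[ψ](η)` (real fields). -/
def RenormDefinedR (d : ℕ) (γ β : ℝ) (ψ : Ed d → Ed d) (η : Ed d) : Prop :=
  IntegrableOn (fun q : ℝ × Ed d => renormKernelR d γ ψ η q.1 q.2)
    (Set.Ioc (1 : ℝ) β⁻¹ ×ˢ Set.univ)

/-- The renormalization operator `R_β` on real vector fields. -/
def renormR (d : ℕ) (γ β : ℝ) (ψ : Ed d → Ed d) (η : Ed d) : Ed d :=
  (β ^ (γ - d - 1) * Real.exp (‖η‖ ^ γ * (1 - β ^ (-γ)))) • ψ (β⁻¹ • η)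
    - γ • ∫ t in Set.Ioc (1 : ℝ) β⁻¹, ∫ x : Ed d, renormKernelR d γ ψ η t x

/-- First coordinate (`x_{d-1}`) of the projection onto the azimuthal plane. -/
def azim1 {d : ℕ} (x : Ed d) : ℝ := if h : d - 2 < d then x ⟨d - 2, h⟩ else 0

/-- Second coordinate (`x_d`) of the projection onto the azimuthal plane. -/
def azim2 {d : ℕ} (x : Ed d) : ℝ := if h : d - 1 < d then x ⟨d - 1, h⟩ else 0

/-- The norm `|x_a|` of the azimuthal projection. -/
def normA {d : ℕ} (x : Ed d) : ℝ := Real.sqrt (azim1 x ^ 2 + azim2 x ^ 2)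

/-- `cos∠_η(x) = ⟨x_a, η_a⟩ / (|x_a| |η_a|)`. -/
def cosAng {d : ℕ} (η x : Ed d) : ℝ :=
  (azim1 x * azim1 η + azim2 x * azim2 η) / (normA x * normA η)

/-- `sin∠_η(x) = (η_{d−1} x_d − η_d x_{d−1}) / (|x_a| |η_a|)`. -/
def sinAng {d : ℕ} (η x : Ed d) : ℝ :=
  (azim1 η * azim2 x - azim2 η * azim1 x) / (normA x * normA η)

/-- The integrand of the nonlinear part of the azimuthal renormalization operator. -/
def aKernel (d : ℕ) (γ : ℝ) (ψ : Ed d → ℝ) (η : Ed d) (t : ℝ) (x : Ed d) : ℝ :=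
  t ^ (-(γ - d - 1)) * Real.exp (‖η‖ ^ γ * (1 - t ^ γ)) *
    (ψ x * ψ (t • η - x) * cosAng η x * sinAng η (t • η - x))

/-- Absolute convergence of the integrals defining the azimuthal `R_β[ψ](η)`. -/
def ARenormDefined (d : ℕ) (γ β : ℝ) (ψ : Ed d → ℝ) (η : Ed d) : Prop :=
  IntegrableOn (fun q : ℝ × Ed d => aKernel d γ ψ η q.1 q.2)
    (Set.Ioc (1 : ℝ) β⁻¹ ×ˢ Set.univ)

/-- The azimuthal renormalization operator `R_β` on scalar functions. -/
def arenorm (d : ℕ) (γ β : ℝ) (ψ : Ed d → ℝ) (η : Ed d) : ℝ :=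
  β ^ (γ - d - 1) * Real.exp (‖η‖ ^ γ * (1 - β ^ (-γ))) * ψ (β⁻¹ • η)
    + γ * normA η * ∫ t in Set.Ioc (1 : ℝ) β⁻¹, ∫ x : Ed d, aKernel d γ ψ η t x

/-- Weighted `L^p` norm `(∫ |f|^p w^p)^{1/p}` of a scalar function, valued in `ℝ≥0∞`. -/
def wLpNorm {d : ℕ} (w : Ed d → ℝ) (p : ℝ) (f : Ed d → ℝ) : ℝ≥0∞ :=
  (∫⁻ x : Ed d, ENNReal.ofReal (|f x| ^ p * w x ^ p)) ^ (1 / p)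

/-- Weighted `L^p` norm of a `ℂ^d`-valued function, valued in `ℝ≥0∞`. -/
def wLpNormC {d : ℕ} (w : Ed d → ℝ) (p : ℝ) (f : Ed d → EdC d) : ℝ≥0∞ :=
  (∫⁻ x : Ed d, ENNReal.ofReal (‖f x‖ ^ p * w x ^ p)) ^ (1 / p)

/-- The weight `u_ν(x) = e^{|x|} |x|^ν`. -/
def uWeight (ν : ℝ) {d : ℕ} (x : Ed d) : ℝ := Real.exp ‖x‖ * ‖x‖ ^ ν

/-- The weight `v_ν(x) = e^{(b/2)|x|} |x|^ν`. -/
def vWeight (b ν : ℝ) {d : ℕ} (x : Ed d) : ℝ := Real.exp (b / 2 * ‖x‖) * ‖x‖ ^ ν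

/-- Membership in `RL^p_{u_ν}`: fields dominated a.e. by a radial function in `L^p_{u_ν}`. -/
def MemRL (d : ℕ) (p ν : ℝ) (ϑ : Ed d → EdC d) : Prop :=
  AEStronglyMeasurable ϑ volume ∧ ∃ g : Ed d → ℝ, Measurable g ∧ IsRadial g ∧
    wLpNorm (uWeight ν) p g < ⊤ ∧ ∀ᵐ x : Ed d, ‖ϑ x‖ ≤ g x

/-- Membership in `RL^p_{u_ν}` with a radial bound of norm at most `A`. -/
def MemRLBall (d : ℕ) (p ν A : ℝ) (ϑ : Ed d → EdC d) : Prop :=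
  AEStronglyMeasurable ϑ volume ∧ ∃ g : Ed d → ℝ, Measurable g ∧ IsRadial g ∧
    wLpNorm (uWeight ν) p g ≤ ENNReal.ofReal A ∧ ∀ᵐ x : Ed d, ‖ϑ x‖ ≤ g x

/-- Membership in the set `M` of functions bounded by `k |η|^σ e^{−b|η|}`. -/
def memM {d : ℕ} (k b σ : ℝ) (ψ : Ed d → ℝ) : Prop :=
  Measurable ψ ∧
    ∀ᵐ η : Ed d, η ≠ 0 → |ψ η| < k * ‖η‖ ^ σ * Real.exp (-b * ‖η‖)

/-- Inclusion of a real vector into `ℂ^d`. -/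
def toC {d : ℕ} (v : Ed d) : EdC d :=
  (WithLp.equiv 2 (Fin d → ℂ)).symm (fun i => (v i : ℂ))

/-- The azimuthal unit vector field `e_{d−1}(y) = (0,…,0,−y_d,y_{d−1})/|y_a|`. -/
def azVec (d : ℕ) (y : Ed d) : Ed d :=
  (WithLp.equiv 2 (Fin d → ℝ)).symm (fun i =>
    if (i : ℕ) = d - 2 then -azim2 y / normA y
    else if (i : ℕ) = d - 1 then azim1 y / normA y
    else 0)

/-- The Leray self-similar ansatz
`v_*(y,t) = i (T−t)^{(d+1−γ)/γ} ψ(y (T−t)^{1/γ}) e_{d−1}(y)`. -/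
def vfun (d : ℕ) (γ : ℝ) (ψ : Ed d → ℝ) (T : ℝ) (y : Ed d) (t : ℝ) : EdC d :=
  (Complex.I *
      ((((T - t) ^ (((d : ℝ) + 1 - γ) / γ) * ψ (((T - t) ^ (1 / γ)) • y)) : ℝ) : ℂ)) •
    toC (azVec d y)

end


section Aux

variable {d : ℕ}

lemma pairC_smul (a : ℝ) (η : Ed d) (v : EdC d) :
    pairC (a • η) v = (a : ℂ) * pairC η v := by
  simp only [pairC, PiLp.smul_apply, smul_eq_mul, Complex.ofReal_mul, Finset.mul_sum, mul_assoc]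

lemma lerayC_smul {a : ℝ} (ha : a ≠ 0) (η : Ed d) (v : EdC d) :
    lerayC (a • η) v = lerayC η v := by
  have haC : (a : ℂ) ≠ 0 := Complex.ofReal_ne_zero.mpr ha
  have ha2 : ((a : ℂ)) ^ 2 ≠ 0 := pow_ne_zero 2 haC
  unfold lerayC
  congr 1
  funext i
  have h1 : ‖a • η‖ ^ 2 = a ^ 2 * ‖η‖ ^ 2 := by
    rw [norm_smul, mul_pow, Real.norm_eq_abs, sq_abs]
  rw [pairC_smul, h1, PiLp.smul_apply, smul_eq_mul]
  push_cast
  congr 1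
  rw [div_mul_eq_mul_div, div_mul_eq_mul_div,
    show (↑a * pairC η v) * (↑a * ↑(η i)) = (pairC η v * ↑(η i)) * (↑a) ^ 2 by ring,
    show ((↑a : ℂ)) ^ 2 * (↑‖η‖) ^ 2 = (↑‖η‖ : ℂ) ^ 2 * (↑a) ^ 2 by ring,
    mul_div_mul_right _ _ ha2]

lemma renormKernelC_scale (γ : ℝ) (ψ : Ed d → EdC d) (η : Ed d) {a s : ℝ}
    (ha : 0 < a) (hs : 0 < s) (x : Ed d) :
    renormKernelC d γ ψ η (a * s) x
      = (a ^ (-(γ - d - 1)) * a⁻¹ * Real.exp (‖η‖ ^ γ * (1 - a ^ γ))) •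
          renormKernelC d γ ψ (a • η) s x := by
  have hns : ‖a • η‖ ^ γ = a ^ γ * ‖η‖ ^ γ := by
    rw [norm_smul, Real.norm_eq_abs, abs_of_pos ha, Real.mul_rpow ha.le (norm_nonneg _)]
  have hts : s • (a • η) = (a * s) • η := by rw [smul_smul, mul_comm]
  have hms : (a * s) ^ (-(γ - (d : ℝ) - 1)) = a ^ (-(γ - (d : ℝ) - 1)) * s ^ (-(γ - (d : ℝ) - 1)) :=
    Real.mul_rpow ha.le hs.le
  have hgs : (a * s) ^ γ = a ^ γ * s ^ γ := Real.mul_rpow ha.le hs.le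
  have hexp : Real.exp (‖η‖ ^ γ * (1 - a ^ γ * s ^ γ))
      = Real.exp (‖η‖ ^ γ * (1 - a ^ γ)) * Real.exp (a ^ γ * ‖η‖ ^ γ * (1 - s ^ γ)) := by
    rw [← Real.exp_add]; congr 1; ring
  unfold renormKernelC
  rw [lerayC_smul ha.ne', pairC_smul, hts, hns, hms, hgs, hexp,
    mul_smul ((a : ℂ)) (pairC η (ψ ((a * s) • η - x))) (lerayC η (ψ x)),
    show ((a : ℂ)) = algebraMap ℝ ℂ a from rfl, algebraMap_smul,
    smul_smul, smul_smul]
  congr 1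
  field_simp

end Aux

/-- a fixed point of `R_β` is a fixed point of `R_{β^n}` for all
`n ≥ 1`. -/
theorem fixed_point_of_power
    (d : ℕ) (hd : 2 ≤ d) (γ : ℝ) (hγ : 1 < γ) (β : ℝ) (hβ : β ∈ Set.Ioo (0 : ℝ) 1)
    (ψ : Ed d → EdC d)
    (hdef : ∀ j : ℕ, 1 ≤ j → ∀ η : Ed d, η ≠ 0 → RenormDefinedC d γ (β ^ j) ψ η)
    (hfix : ∀ η : Ed d, η ≠ 0 → renormC d γ β ψ η = ψ η) :
    ∀ n : ℕ, 1 ≤ n → ∀ η : Ed d, η ≠ 0 → renormC d γ (β ^ n) ψ η = ψ η := by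
  obtain ⟨hβ0, hβ1⟩ := hβ
  intro n hn
  induction n with
  | zero => omega
  | succ m ih =>
    rcases Nat.eq_zero_or_pos m with rfl | hm
    · intro η hη
      simpa only [zero_add, pow_one] using hfix η hη
    · intro η hη
      have ihm := ih hm η hη
      set A : ℝ := (β ^ m)⁻¹ with hAdef
      have hβm : (0 : ℝ) < β ^ m := pow_pos hβ0 m
      have hβm1 : β ^ m ≤ 1 := pow_le_one₀ hβ0.le hβ1.le
      have hA0 : 0 < A := inv_pos.mpr hβm
      have hA1 : (1 : ℝ) ≤ A := (one_le_inv₀ hβm).mpr hβm1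
      have h1β : (1 : ℝ) ≤ β⁻¹ := (one_le_inv₀ hβ0).mpr hβ1.le
      have hBinv : (β ^ (m + 1))⁻¹ = A * β⁻¹ := by rw [pow_succ, mul_inv]
      have hAB : A ≤ A * β⁻¹ := le_mul_of_one_le_right hA0.le h1β
      -- integrability of the outer integrand
      have hint : IntegrableOn (fun t => ∫ x, renormKernelC d γ ψ η t x)
          (Set.Ioc 1 (β ^ (m + 1))⁻¹) volume := by
        have h := hdef (m + 1) (by omega) η hη
        unfold RenormDefinedC at h
        rw [IntegrableOn, Measure.volume_eq_prod, ← Measure.prod_restrict,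
          Measure.restrict_univ] at h
        exact h.integral_prod_left
      rw [hBinv] at hint
      -- split the integral
      have hsplit : (∫ t in Set.Ioc 1 (β ^ (m + 1))⁻¹, ∫ x, renormKernelC d γ ψ η t x)
          = (∫ t in Set.Ioc 1 A, ∫ x, renormKernelC d γ ψ η t x)
            + ∫ t in Set.Ioc A (A * β⁻¹), ∫ x, renormKernelC d γ ψ η t x := by
        rw [hBinv, ← Set.Ioc_union_Ioc_eq_Ioc hA1 hAB]
        exact setIntegral_union (Set.Ioc_disjoint_Ioc_of_le le_rfl) measurableSet_Ioc
          (hint.mono_set (Set.Ioc_subset_Ioc_right hAB))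
          (hint.mono_set (Set.Ioc_subset_Ioc_left hA1))
      -- change of variables in the tail
      have hcov : (∫ t in Set.Ioc A (A * β⁻¹), ∫ x, renormKernelC d γ ψ η t x)
          = A • ∫ s in Set.Ioc 1 β⁻¹, ∫ x, renormKernelC d γ ψ η (A * s) x := by
        rw [← intervalIntegral.integral_of_le hAB, ← intervalIntegral.integral_of_le h1β,
          intervalIntegral.integral_comp_mul_left
            (fun t => ∫ x, renormKernelC d γ ψ η t x) hA0.ne', mul_one,
          smul_inv_smul₀ hA0.ne']
      -- rescale the kernel
      have hker : (∫ s in Set.Ioc 1 β⁻¹, ∫ x, renormKernelC d γ ψ η (A * s) x)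
          = (A ^ (-(γ - d - 1)) * A⁻¹ * Real.exp (‖η‖ ^ γ * (1 - A ^ γ))) •
              ∫ s in Set.Ioc 1 β⁻¹, ∫ x, renormKernelC d γ ψ (A • η) s x := by
        rw [← integral_smul]
        refine setIntegral_congr_fun measurableSet_Ioc (fun s hs => ?_)
        have hs0 : 0 < s := zero_lt_one.trans hs.1
        rw [← integral_smul]
        exact integral_congr_ae (Filter.Eventually.of_forall
          (fun x => renormKernelC_scale γ ψ η hA0 hs0 x))
      -- fixed point at A • η
      have hAη : A • η ≠ 0 := smul_ne_zero hA0.ne' hη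
      have hfixA := hfix (A • η) hAη
      unfold renormC at hfixA ihm ⊢
      rw [hsplit, hcov, hker, smul_smul]
      -- scalar identities
      have hApow : ∀ y : ℝ, A ^ y = (β ^ m) ^ (-y) := fun y => by
        rw [hAdef, Real.inv_rpow hβm.le, ← Real.rpow_neg hβm.le]
      have hEm : A * (A ^ (-(γ - ↑d - 1)) * A⁻¹ * Real.exp (‖η‖ ^ γ * (1 - A ^ γ)))
          = (β ^ m) ^ (γ - ↑d - 1) * Real.exp (‖η‖ ^ γ * (1 - (β ^ m) ^ (-γ))) := by
        rw [hApow, hApow, neg_neg,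
          show A * ((β ^ m) ^ (γ - ↑d - 1) * A⁻¹ * Real.exp (‖η‖ ^ γ * (1 - (β ^ m) ^ (-γ))))
            = (β ^ m) ^ (γ - ↑d - 1) * Real.exp (‖η‖ ^ γ * (1 - (β ^ m) ^ (-γ))) * (A * A⁻¹)
            by ring,
          mul_inv_cancel₀ hA0.ne', mul_one]
      rw [hEm]
      have h2 : (Complex.I * (γ:ℂ)) • (∫ s in Set.Ioc 1 β⁻¹, ∫ x, renormKernelC d γ ψ (A • η) s x)
          = ψ (A • η)
            - (β ^ (γ - ↑d - 1) * Real.exp (‖A • η‖ ^ γ * (1 - β ^ (-γ)))) • ψ (β⁻¹ • A • η) :=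
        eq_sub_of_add_eq' hfixA
      have h1 : (Complex.I * (γ:ℂ)) • (∫ t in Set.Ioc 1 A, ∫ x, renormKernelC d γ ψ η t x)
          = ψ η - ((β ^ m) ^ (γ - ↑d - 1)
              * Real.exp (‖η‖ ^ γ * (1 - (β ^ m) ^ (-γ)))) • ψ ((β ^ m)⁻¹ • η) :=
        eq_sub_of_add_eq' ihm
      rw [smul_add, h1, smul_comm, h2, smul_sub, smul_smul]
      -- final scalar identity
      have hnorm : ‖A • η‖ ^ γ = A ^ γ * ‖η‖ ^ γ := by
        rw [norm_smul, Real.norm_eq_abs, abs_of_pos hA0, Real.mul_rpow hA0.le (norm_nonneg _)]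
      have hexp2 : Real.exp (‖η‖ ^ γ * (1 - (β ^ m) ^ (-γ)))
            * Real.exp ((β ^ m) ^ (-γ) * ‖η‖ ^ γ * (1 - β ^ (-γ)))
          = Real.exp (‖η‖ ^ γ * (1 - (β ^ m) ^ (-γ) * β ^ (-γ))) := by
        rw [← Real.exp_add]; congr 1; ring
      have hL : (β ^ m) ^ (γ - ↑d - 1) * Real.exp (‖η‖ ^ γ * (1 - (β ^ m) ^ (-γ)))
            * (β ^ (γ - ↑d - 1) * Real.exp (‖A • η‖ ^ γ * (1 - β ^ (-γ))))
          = (β ^ (m + 1)) ^ (γ - ↑d - 1)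
            * Real.exp (‖η‖ ^ γ * (1 - (β ^ (m + 1)) ^ (-γ))) := by
        rw [hnorm, hApow γ, pow_succ β m, Real.mul_rpow hβm.le hβ0.le,
          Real.mul_rpow hβm.le hβ0.le, ← hexp2]
        ring
      have hvec : β⁻¹ • A • η = (β ^ (m + 1))⁻¹ • η := by
        rw [smul_smul, hBinv, mul_comm]
      rw [hL, hvec, ← hAdef]
      abel
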